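/- arXiv:0804.0566 — 7 statements merged into one kernel-verified Lean document; each statement's English description precedes it below -/
import Mathlib

section
/- Let a₁, a₂ be linearly independent vectors in ℝ². For any integers ℓ₁, ℓ₂ with |ℓ₂| ≥ 2, there exists an integer ℓ such that the point ℓ·a₁ + sgn(ℓ₂)·a₂ belongs to the closed triangle with vertices 0, a₁, and ℓ₁·a₁ + ℓ₂·a₂. -/
/-!
Put `n = |ℓ₂|` and `p = ℓ₁ • a₁ + ℓ₂ • a₂`. Since `ℓ₂ = sgn(ℓ₂) n`, we have
`ℓ • a₁ + sgn(ℓ₂) • a₂ = ((n ℓ - ℓ₁) / n) • a₁ + (1 / n) • p`, and this lies in the triangle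
`0, a₁, p` as soon as `0 ≤ n ℓ - ℓ₁ < n`, which a suitable (ceiling) choice of `ℓ` achieves.
-/

open Set

theorem smul_add_smul_mem_convexHull_zero {𝕜 E : Type*} [Field 𝕜] [LinearOrder 𝕜]
    [IsStrictOrderedRing 𝕜] [AddCommGroup E] [Module 𝕜 E] {x y : E} {β γ : 𝕜}
    (hβ : 0 ≤ β) (hγ : 0 ≤ γ) (hβγ : β + γ ≤ 1) :
    β • x + γ • y ∈ convexHull 𝕜 {0, x, y} := by
  have h := (convex_convexHull 𝕜 ({0, x, y} : Set E)).sum_mem (t := Finset.univ)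
    (w := ![1 - (β + γ), β, γ]) (z := ![0, x, y])
    (by simp [Fin.forall_fin_succ, hβ, hγ, hβγ])
    (by simp [Fin.sum_univ_three]; ring)
    (fun i _ => subset_convexHull 𝕜 _ (by fin_cases i <;> simp))
  simpa [Fin.sum_univ_three] using h

theorem Int.exists_mul_sub_mem_Ico (a : ℤ) {n : ℤ} (hn : 0 < n) :
    ∃ ℓ : ℤ, n * ℓ - a ∈ Ico 0 n := by
  refine ⟨-(-a / n), ?_⟩
  have h := Int.mul_ediv_add_emod (-a) n
  have h₀ := Int.emod_nonneg (-a) hn.ne'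
  have h₁ := Int.emod_lt_of_pos (-a) hn
  constructor <;> linarith

theorem stmt0_general (a₁ a₂ : EuclideanSpace ℝ (Fin 2))
    (ℓ₁ ℓ₂ : ℤ) (hℓ₂ : 2 ≤ |ℓ₂|) :
    ∃ ℓ : ℤ, (ℓ : ℝ) • a₁ + (Int.sign ℓ₂ : ℝ) • a₂ ∈
      convexHull ℝ {0, a₁, (ℓ₁ : ℝ) • a₁ + (ℓ₂ : ℝ) • a₂} := by
  set n := |ℓ₂|
  have hn : 0 < n := by omega
  obtain ⟨ℓ, hr₀, hrn⟩ := Int.exists_mul_sub_mem_Ico ℓ₁ hn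
  refine ⟨ℓ, ?_⟩
  have hnR : (0 : ℝ) < n := by exact_mod_cast hn
  have hsign : (Int.sign ℓ₂ : ℝ) * n = ℓ₂ := by exact_mod_cast Int.sign_mul_abs ℓ₂
  have key : (ℓ : ℝ) • a₁ + (Int.sign ℓ₂ : ℝ) • a₂ =
      (((n * ℓ - ℓ₁ : ℤ) : ℝ) / n) • a₁ + (1 / (n : ℝ)) • ((ℓ₁ : ℝ) • a₁ + (ℓ₂ : ℝ) • a₂) := by
    rw [← hsign]
    match_scalars
    · field_simp
      ring
    · field_simp
  rw [key]
  refine smul_add_smul_mem_convexHull_zero (by positivity) (by positivity) ?_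
  rw [← add_div, div_le_one hnR]
  exact_mod_cast hrn

/-- For linearly independent `a₁, a₂` in `ℝ²` and integers `ℓ₁, ℓ₂` with `|ℓ₂| ≥ 2`,
there is an integer `ℓ` such that `ℓ•a₁ + sgn(ℓ₂)•a₂` lies in the closed triangle
with vertices `0`, `a₁` and `ℓ₁•a₁ + ℓ₂•a₂`. -/
theorem stmt0 (a₁ a₂ : EuclideanSpace ℝ (Fin 2))
    (h : LinearIndependent ℝ ![a₁, a₂])
    (ℓ₁ ℓ₂ : ℤ) (hℓ₂ : 2 ≤ |ℓ₂|) :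
    ∃ ℓ : ℤ, (ℓ : ℝ) • a₁ + (Int.sign ℓ₂ : ℝ) • a₂ ∈
      convexHull ℝ {0, a₁, (ℓ₁ : ℝ) • a₁ + (ℓ₂ : ℝ) • a₂} :=
  stmt0_general a₁ a₂ ℓ₁ ℓ₂ hℓ₂
end

section
/- Let ξ > 0, w, z ∈ (−1,1), and v ∈ (0,1). Set a₁ = (ξ, z+w) ∈ ℝ² and a₂ = (vξ, v(z+w) + ξ⁻¹) ∈ ℝ², and let R = (0,ξ) × (z−1, z+1) ⊂ ℝ² be an open rectangle. Then the lattice ℤa₁ + ℤa₂ contains a point of R if and only if a₂ ∈ R or a₁ − a₂ ∈ R. -/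
open Set

set_option maxHeartbeats 1000000 in
/-- For `ξ > 0`, `w, z ∈ (−1,1)`, `v ∈ (0,1)`, with `a₁ = (ξ, z+w)`,
`a₂ = (vξ, v(z+w) + ξ⁻¹)` and `R = (0,ξ) × (z−1, z+1)`, the lattice
`ℤa₁ + ℤa₂` contains a point of `R` iff `a₂ ∈ R` or `a₁ − a₂ ∈ R`. -/
theorem stmt1 (ξ w z v : ℝ) (hξ : 0 < ξ) (hw : w ∈ Ioo (-1 : ℝ) 1)
    (hz : z ∈ Ioo (-1 : ℝ) 1) (hv : v ∈ Ioo (0 : ℝ) 1)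
    (a₁ a₂ : ℝ × ℝ) (ha₁ : a₁ = (ξ, z + w))
    (ha₂ : a₂ = (v * ξ, v * (z + w) + ξ⁻¹))
    (R : Set (ℝ × ℝ)) (hR : R = Ioo 0 ξ ×ˢ Ioo (z - 1) (z + 1)) :
    (∃ ℓ₁ ℓ₂ : ℤ, ℓ₁ • a₁ + ℓ₂ • a₂ ∈ R) ↔ (a₂ ∈ R ∨ a₁ - a₂ ∈ R) := by
  obtain ⟨hw1, hw2⟩ := hw
  obtain ⟨hz1, hz2⟩ := hz
  obtain ⟨hv1, hv2⟩ := hv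
  have hξi : (0:ℝ) < ξ⁻¹ := by positivity
  subst ha₁ ha₂ hR
  simp only [Prod.smul_mk, smul_eq_mul, Prod.mk_add_mk, Set.mem_prod, Set.mem_Ioo,
    zsmul_eq_mul, Prod.fst, Prod.snd, Prod.mk_sub_mk]
  constructor
  · rintro ⟨ℓ₁, ℓ₂, ⟨h1, h2⟩, h3, h4⟩
    have ht0 : 0 < (ℓ₁:ℝ) + (ℓ₂:ℝ) * v := by
      have hh : (0:ℝ) * ξ < ((ℓ₁:ℝ) + (ℓ₂:ℝ) * v) * ξ := by nlinarith
      exact lt_of_mul_lt_mul_right hh hξ.le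
    have ht1 : (ℓ₁:ℝ) + (ℓ₂:ℝ) * v < 1 := by
      have hh : ((ℓ₁:ℝ) + (ℓ₂:ℝ) * v) * ξ < 1 * ξ := by nlinarith
      exact lt_of_mul_lt_mul_right hh hξ.le
    have h3' : z - 1 < ((ℓ₁:ℝ) + (ℓ₂:ℝ) * v) * (z + w) + (ℓ₂:ℝ) * ξ⁻¹ := by nlinarith
    have h4' : ((ℓ₁:ℝ) + (ℓ₂:ℝ) * v) * (z + w) + (ℓ₂:ℝ) * ξ⁻¹ < z + 1 := by nlinarith
    rcases lt_trichotomy ℓ₂ 0 with hneg | hzero | hpos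
    · -- ℓ₂ ≤ -1 : show a₁ - a₂ ∈ R
      right
      have hn1 : (ℓ₂:ℝ) ≤ -1 := by
        have : ℓ₂ ≤ -1 := by omega
        exact_mod_cast this
      have hl1 : (1:ℝ) ≤ (ℓ₁:ℝ) := by
        have hr : (0:ℝ) < (ℓ₁:ℝ) := by nlinarith
        have hi : (0:ℤ) < ℓ₁ := by exact_mod_cast hr
        exact_mod_cast hi
      have hl2 : (ℓ₁:ℝ) ≤ -(ℓ₂:ℝ) := by
        have hr : (ℓ₁:ℝ) < -(ℓ₂:ℝ) + 1 := by nlinarith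
        have hi : ℓ₁ < -ℓ₂ + 1 := by exact_mod_cast hr
        have : ℓ₁ ≤ -ℓ₂ := by omega
        exact_mod_cast this
      refine ⟨⟨by nlinarith, by nlinarith⟩, ?_, ?_⟩
      · -- z - 1 < (1-v)(z+w) - ξ⁻¹ , i.e. ξ⁻¹ < 1 - z + (1-v)(z+w)
        have key : (1 - z + ((ℓ₁:ℝ) + (ℓ₂:ℝ) * v) * (z + w))
            ≤ (-(ℓ₂:ℝ)) * (1 - z + (1 - v) * (z + w)) := by
          rcases le_or_gt 0 (z + w) with hzw | hzw
          · nlinarith [mul_nonneg (by nlinarith : (0:ℝ) ≤ -(ℓ₂:ℝ) - (ℓ₁:ℝ)) hzw]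
          · nlinarith [mul_nonneg (by nlinarith : (0:ℝ) ≤ (ℓ₁:ℝ) - 1)
              (by linarith : (0:ℝ) ≤ -(z + w))]
        have h5 : (-(ℓ₂:ℝ)) * ξ⁻¹ < 1 - z + ((ℓ₁:ℝ) + (ℓ₂:ℝ) * v) * (z + w) := by nlinarith
        have h6 := lt_of_lt_of_le h5 key
        have := lt_of_mul_lt_mul_left h6 (by linarith : (0:ℝ) ≤ -(ℓ₂:ℝ))
        nlinarith
      · rcases le_or_gt 0 (z + w) with hzw | hzw
        · nlinarith
        · nlinarith
    · exfalso
      subst hzero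
      have hm0 : (0:ℝ) < (ℓ₁:ℝ) := by push_cast at ht0 ⊢; linarith
      have hm1 : (ℓ₁:ℝ) < 1 := by push_cast at ht1 ⊢; linarith
      have h5 : (0:ℤ) < ℓ₁ := by exact_mod_cast hm0
      have h6 : ℓ₁ < 1 := by exact_mod_cast hm1
      omega
    · -- ℓ₂ ≥ 1 : show a₂ ∈ R
      left
      have hn1 : (1:ℝ) ≤ (ℓ₂:ℝ) := by exact_mod_cast hpos
      have hl1 : (ℓ₁:ℝ) ≤ 0 := by
        have hr : (ℓ₁:ℝ) < 1 := by nlinarith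
        have hi : ℓ₁ < 1 := by exact_mod_cast hr
        have : ℓ₁ ≤ 0 := by omega
        exact_mod_cast this
      have hl2 : 1 - (ℓ₂:ℝ) ≤ (ℓ₁:ℝ) := by
        have hr : -(ℓ₂:ℝ) < (ℓ₁:ℝ) := by nlinarith
        have hi : -ℓ₂ < ℓ₁ := by exact_mod_cast hr
        have : 1 - ℓ₂ ≤ ℓ₁ := by omega
        exact_mod_cast this
      refine ⟨⟨by nlinarith, by nlinarith⟩, ?_, ?_⟩
      · rcases le_or_gt 0 (z + w) with hzw | hzw
        · nlinarith
        · nlinarith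
      · -- v(z+w) + ξ⁻¹ < z + 1
        have key : (z + 1 - ((ℓ₁:ℝ) + (ℓ₂:ℝ) * v) * (z + w))
            ≤ (ℓ₂:ℝ) * (z + 1 - v * (z + w)) := by
          rcases le_or_gt 0 (z + w) with hzw | hzw
          · nlinarith [mul_nonneg (by nlinarith : (0:ℝ) ≤ (ℓ₂:ℝ) - 1 + (ℓ₁:ℝ)) hzw]
          · nlinarith [mul_nonneg (by nlinarith : (0:ℝ) ≤ -(ℓ₁:ℝ))
              (by linarith : (0:ℝ) ≤ -(z + w))]
        have h5 : (ℓ₂:ℝ) * ξ⁻¹ < z + 1 - ((ℓ₁:ℝ) + (ℓ₂:ℝ) * v) * (z + w) := by nlinarith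
        have h6 := lt_of_lt_of_le h5 key
        have := lt_of_mul_lt_mul_left h6 (by linarith : (0:ℝ) ≤ (ℓ₂:ℝ))
        nlinarith
  · rintro (⟨⟨h1, h2⟩, h3, h4⟩ | ⟨⟨h1, h2⟩, h3, h4⟩)
    · exact ⟨0, 1, by norm_num; exact ⟨⟨h1, h2⟩, h3, h4⟩⟩
    · exact ⟨1, -1, by norm_num; constructor <;> constructor <;> linarith⟩
end

section
/- Let ξ > 0 and w, z ∈ (−1,1) with z + w ≥ 0, and let v ∈ (0,1). Then the following two conditions are equivalent: (i) v(z+w) + ξ⁻¹ ∉ (z−1, z+1) and (1−v)(z+w) − ξ⁻¹ ∉ (z−1, z+1); (ii) v(z+w) ≥ 1 + max(z,w) − ξ⁻¹. -/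
open Set

/-- For `ξ > 0`, `w, z ∈ (−1,1)` with `z + w ≥ 0` and `v ∈ (0,1)`:
`v(z+w) + ξ⁻¹ ∉ (z−1, z+1)` and `(1−v)(z+w) − ξ⁻¹ ∉ (z−1, z+1)`
if and only if `v(z+w) ≥ 1 + max(z,w) − ξ⁻¹`. -/
theorem stmt2 (ξ w z v : ℝ) (hξ : 0 < ξ) (hw : w ∈ Ioo (-1 : ℝ) 1)
    (hz : z ∈ Ioo (-1 : ℝ) 1) (hzw : 0 ≤ z + w) (hv : v ∈ Ioo (0 : ℝ) 1) :
    (v * (z + w) + ξ⁻¹ ∉ Ioo (z - 1) (z + 1) ∧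
      (1 - v) * (z + w) - ξ⁻¹ ∉ Ioo (z - 1) (z + 1)) ↔
    v * (z + w) ≥ 1 + max z w - ξ⁻¹ := by
  obtain ⟨hw1, hw2⟩ := hw
  obtain ⟨hz1, hz2⟩ := hz
  obtain ⟨hv1, hv2⟩ := hv
  have hxi : 0 < ξ⁻¹ := inv_pos.mpr hξ
  simp only [mem_Ioo, not_and, not_lt] at *
  have hvs : 0 ≤ v * (z + w) := by positivity
  constructor
  · rintro ⟨h1, h2⟩
    have ha : z + 1 ≤ v * (z + w) + ξ⁻¹ := h1 (by nlinarith)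
    have hb : (1 - v) * (z + w) - ξ⁻¹ ≤ z - 1 := by
      by_contra hc
      push_neg at hc
      have := h2 hc
      nlinarith
    rcases le_total z w with h | h
    · rw [max_eq_right h]; nlinarith
    · rw [max_eq_left h]; nlinarith
  · intro h
    rcases le_total z w with hm | hm
    · rw [max_eq_right hm] at h
      constructor
      · intro _; nlinarith
      · intro hc; nlinarith
    · rw [max_eq_left hm] at h
      constructor
      · intro _; nlinarith
      · intro hc; nlinarith
end

section
/- Let ξ > 0 and w, z ∈ (−1,1). Set a₁ = (ξ, z+w) ∈ ℝ² and, for v ∈ ℝ, a₂(v) = (vξ, v(z+w) + ξ⁻¹) ∈ ℝ², and let R = (0,ξ) × (z−1, z+1) ⊂ ℝ². Then the Lebesgue measure of the set {v ∈ (0,1) : (ℤa₁ + ℤa₂(v)) ∩ R = ∅} equals (π²/6)·Φ₀(ξ,w,z). -/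
open Real Set MeasureTheory

noncomputable def Υ (x : ℝ) : ℝ := if x ≤ 0 then 0 else if x < 1 then x else 1

noncomputable def Φ₀ (ξ w z : ℝ) : ℝ :=
  if w + z ≠ 0 then (6 / π ^ 2) * Υ (1 + (ξ⁻¹ - max |w| |z| - 1) / |w + z|)
  else if ξ⁻¹ < 1 + |w| then 0 else 6 / π ^ 2

/-!
In the basis `b₁ = a₂(v)`, `b₂ = a₁ - a₂(v)` of the lattice, the first coordinates `vξ` and
`(1 - v)ξ` are positive and add up to `ξ`, so a lattice point `P b₁ + Q b₂` whose first coordinate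
lies in `(0, ξ)` has `P ≥ 1, Q ≤ 0` or `P ≤ 0, Q ≥ 1`; its height is then at least that of `b₁`
or at most that of `b₂`. Hence the lattice misses `R` exactly when `b₁` lies above and `b₂` below
the strip `z - 1 < y < z + 1`, i.e. when `max w z + 1 - ξ⁻¹ ≤ v (z + w)`, a half-line condition
on `v` whose measure within `(0, 1)` is the clamp `Υ` of an affine expression.
-/

theorem Υ_eq_max_min (x : ℝ) : Υ x = max (min x 1) 0 := by
  unfold Υ
  split_ifs <;> grind

theorem ofReal_Υ (x : ℝ) : ENNReal.ofReal (Υ x) = ENNReal.ofReal (min x 1) := by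
  simp [Υ_eq_max_min]

theorem volume_Ioo_inter_Iic (a : ℝ) : volume (Ioo 0 1 ∩ Iic a) = ENNReal.ofReal (Υ a) := by
  rw [measure_congr (Ioo_ae_eq_Ioc.inter (ae_eq_refl (Iic a))), Ioc_inter_Iic, Real.volume_Ioc,
    ofReal_Υ, sub_zero, min_comm]

theorem volume_Ioo_inter_Ici (a : ℝ) : volume (Ioo 0 1 ∩ Ici a) = ENNReal.ofReal (Υ (1 - a)) := by
  rw [measure_congr (Ioo_ae_eq_Ico.inter (ae_eq_refl (Ici a))), Ico_inter_Ici, Real.volume_Ico,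
    ofReal_Υ]
  congr 1
  rw [← min_sub_sub_left, sub_zero, min_comm]

theorem one_le_and_nonpos_or_nonpos_and_one_le_of_mem_Ioo {x₁ x₂ : ℝ} (hx₁ : 0 < x₁) (hx₂ : 0 < x₂)
    {P Q : ℤ} (h : (P : ℝ) * x₁ + Q * x₂ ∈ Ioo 0 (x₁ + x₂)) :
    (1 ≤ P ∧ Q ≤ 0) ∨ (P ≤ 0 ∧ 1 ≤ Q) := by
  obtain ⟨h₀, h₁⟩ := h
  rcases le_or_gt P 0 with hP | hP <;> rcases le_or_gt Q 0 with hQ | hQ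
  · have hP' : (P : ℝ) ≤ 0 := by exact_mod_cast hP
    have hQ' : (Q : ℝ) ≤ 0 := by exact_mod_cast hQ
    nlinarith
  · exact Or.inr ⟨hP, hQ⟩
  · exact Or.inl ⟨hP, hQ⟩
  · have hP' : (1 : ℝ) ≤ P := by exact_mod_cast hP
    have hQ' : (1 : ℝ) ≤ Q := by exact_mod_cast hQ
    nlinarith

theorem zsmul_add_zsmul_notMem_Ioo_prod_Ioo {x₁ x₂ y₁ y₂ lo hi : ℝ} (hx₁ : 0 < x₁) (hx₂ : 0 < x₂)
    (hhi : hi ≤ y₁) (hy₁ : 0 ≤ y₁) (hlo : y₂ ≤ lo) (hy₂ : y₂ ≤ 0) (P Q : ℤ) :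
    P • (x₁, y₁) + Q • (x₂, y₂) ∉ Ioo 0 (x₁ + x₂) ×ˢ Ioo lo hi := by
  simp only [Prod.smul_mk, zsmul_eq_mul, Prod.mk_add_mk, mem_prod]
  rintro ⟨hx, hy_lo, hy_hi⟩
  rcases one_le_and_nonpos_or_nonpos_and_one_le_of_mem_Ioo hx₁ hx₂ hx with ⟨hP, hQ⟩ | ⟨hP, hQ⟩
  · have hP' : (1 : ℝ) ≤ P := by exact_mod_cast hP
    have hQ' : (Q : ℝ) ≤ 0 := by exact_mod_cast hQ
    nlinarith
  · have hP' : (P : ℝ) ≤ 0 := by exact_mod_cast hP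
    have hQ' : (1 : ℝ) ≤ Q := by exact_mod_cast hQ
    nlinarith

theorem lattice_avoids_rect_iff {ξ w z v : ℝ} (hξ : 0 < ξ) (hw : w ∈ Ioo (-1 : ℝ) 1)
    (hz : z ∈ Ioo (-1 : ℝ) 1) (hv : v ∈ Ioo (0 : ℝ) 1) :
    (∀ ℓ₁ ℓ₂ : ℤ, ℓ₁ • (ξ, z + w) + ℓ₂ • (v * ξ, v * (z + w) + ξ⁻¹) ∉
      Ioo 0 ξ ×ˢ Ioo (z - 1) (z + 1)) ↔ max w z + 1 - ξ⁻¹ ≤ v * (z + w) := by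
  obtain ⟨hw₁, hw₂⟩ := hw
  obtain ⟨hz₁, hz₂⟩ := hz
  obtain ⟨hv₀, hv₁⟩ := hv
  have hc : 0 < ξ⁻¹ := inv_pos.mpr hξ
  set A := v * (z + w) + ξ⁻¹
  have hbasis (ℓ₁ ℓ₂ : ℤ) : ℓ₁ • (ξ, z + w) + ℓ₂ • (v * ξ, A) =
      (ℓ₁ + ℓ₂) • (v * ξ, A) + ℓ₁ • ((1 - v) * ξ, z + w - A) := by
    simp only [Prod.smul_mk, zsmul_eq_mul, Prod.mk_add_mk, Int.cast_add, Prod.mk.injEq]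
    constructor <;> ring
  have hξ_split : v * ξ + (1 - v) * ξ = ξ := by ring
  have hx₁ : 0 < v * ξ := mul_pos hv₀ hξ
  have hx₂ : 0 < (1 - v) * ξ := mul_pos (by linarith) hξ
  rw [show max w z + 1 - ξ⁻¹ ≤ v * (z + w) ↔ max w z ≤ A - 1 by constructor <;> intro <;> linarith,
    max_le_iff]
  constructor
  · intro h
    have hb₁ := h 0 1
    have hb₂ := h 1 (-1)
    rw [hbasis] at hb₁ hb₂
    simp only [zero_add, one_smul, zero_smul, add_zero, add_neg_cancel,
      mem_prod, mem_Ioo, not_and, not_lt] at hb₁ hb₂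
    have hA_hi : z + 1 ≤ A := hb₁ ⟨hx₁, by linarith⟩ (by nlinarith)
    have hB_lo : z + w - A ≤ z - 1 := by
      by_contra! hB
      exact absurd (hb₂ ⟨hx₂, by linarith⟩ hB) (by nlinarith)
    constructor <;> linarith
  · rintro ⟨hwA, hzA⟩ ℓ₁ ℓ₂
    have := zsmul_add_zsmul_notMem_Ioo_prod_Ioo (y₁ := A) (y₂ := z + w - A) (lo := z - 1)
      (hi := z + 1) hx₁ hx₂ (by linarith) (by linarith) (by linarith) (by linarith) (ℓ₁ + ℓ₂) ℓ₁
    rw [hξ_split] at this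
    rwa [hbasis]

theorem volume_setOf_le_mul_of_pos {K s : ℝ} (hs : 0 < s) :
    volume {v ∈ Ioo (0 : ℝ) 1 | K ≤ v * s} = ENNReal.ofReal (Υ (1 - K / s)) := by
  rw [← volume_Ioo_inter_Ici]
  congr 1
  ext v
  simp [div_le_iff₀ hs]

theorem volume_setOf_le_mul_of_neg {K s : ℝ} (hs : s < 0) :
    volume {v ∈ Ioo (0 : ℝ) 1 | K ≤ v * s} = ENNReal.ofReal (Υ (K / s)) := by
  rw [← volume_Ioo_inter_Iic]
  congr 1
  ext v
  simp [le_div_iff_of_neg hs]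

theorem volume_setOf_le_mul_zero (K : ℝ) :
    volume {v ∈ Ioo (0 : ℝ) 1 | K ≤ v * 0} = ENNReal.ofReal (if K ≤ 0 then 1 else 0) := by
  simp only [mul_zero]
  split_ifs with hK
  · simp only [hK, sep_true, Real.volume_Ioo]
    norm_num
  · simp [hK]

theorem pi_sq_div_six_mul_Φ₀ (ξ w z : ℝ) :
    π ^ 2 / 6 * Φ₀ ξ w z = if w + z ≠ 0 then Υ (1 + (ξ⁻¹ - max |w| |z| - 1) / |w + z|)
      else if ξ⁻¹ < 1 + |w| then 0 else 1 := by
  have h : π ^ 2 / 6 * (6 / π ^ 2) = 1 := by field_simp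
  unfold Φ₀
  split_ifs <;> simp [← mul_assoc, h]

theorem max_abs_abs_of_add_pos {w z : ℝ} (h : 0 < w + z) : max |w| |z| = max w z := by
  grind

theorem max_abs_abs_of_add_neg {w z : ℝ} (h : w + z < 0) : max |w| |z| = -min w z := by
  grind

theorem pi_sq_div_six_mul_Φ₀_of_pos {ξ w z : ℝ} (h : 0 < w + z) :
    π ^ 2 / 6 * Φ₀ ξ w z = Υ (1 - (max w z + 1 - ξ⁻¹) / (w + z)) := by
  rw [pi_sq_div_six_mul_Φ₀, if_pos h.ne', max_abs_abs_of_add_pos h, abs_of_pos h]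
  ring_nf

theorem pi_sq_div_six_mul_Φ₀_of_neg {ξ w z : ℝ} (h : w + z < 0) :
    π ^ 2 / 6 * Φ₀ ξ w z = Υ ((max w z + 1 - ξ⁻¹) / (w + z)) := by
  rw [pi_sq_div_six_mul_Φ₀, if_pos h.ne, max_abs_abs_of_add_neg h, abs_of_neg h]
  congr 1
  field_simp
  grind

theorem pi_sq_div_six_mul_Φ₀_of_add_eq_zero {ξ w z : ℝ} (h : w + z = 0) :
    π ^ 2 / 6 * Φ₀ ξ w z = if max w z + 1 - ξ⁻¹ ≤ 0 then 1 else 0 := by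
  rw [pi_sq_div_six_mul_Φ₀, if_neg (not_not.mpr h), show z = -w by linarith, ← abs_eq_max_neg]
  split_ifs <;> first | rfl | linarith

/-- The Lebesgue measure of the set of `v ∈ (0,1)` for which the lattice
`ℤa₁ + ℤa₂(v)` avoids the rectangle `R = (0,ξ) × (z−1, z+1)` equals
`(π²/6)·Φ₀(ξ,w,z)`. -/
theorem stmt3 (ξ w z : ℝ) (hξ : 0 < ξ) (hw : w ∈ Ioo (-1 : ℝ) 1)
    (hz : z ∈ Ioo (-1 : ℝ) 1)
    (a₁ : ℝ × ℝ) (a₂ : ℝ → ℝ × ℝ) (ha₁ : a₁ = (ξ, z + w))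
    (ha₂ : ∀ v : ℝ, a₂ v = (v * ξ, v * (z + w) + ξ⁻¹))
    (R : Set (ℝ × ℝ)) (hR : R = Ioo 0 ξ ×ˢ Ioo (z - 1) (z + 1)) :
    volume {v ∈ Ioo (0 : ℝ) 1 | ∀ ℓ₁ ℓ₂ : ℤ, ℓ₁ • a₁ + ℓ₂ • a₂ v ∉ R} =
      ENNReal.ofReal (π ^ 2 / 6 * Φ₀ ξ w z) := by
  subst ha₁ hR
  have hgood : {v ∈ Ioo (0 : ℝ) 1 | ∀ ℓ₁ ℓ₂ : ℤ,
      ℓ₁ • (ξ, z + w) + ℓ₂ • a₂ v ∉ Ioo 0 ξ ×ˢ Ioo (z - 1) (z + 1)} =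
      {v ∈ Ioo (0 : ℝ) 1 | max w z + 1 - ξ⁻¹ ≤ v * (w + z)} := by
    ext v
    refine and_congr_right fun hv => ?_
    rw [ha₂, lattice_avoids_rect_iff hξ hw hz hv, add_comm z w]
  rw [hgood]
  rcases lt_trichotomy (w + z) 0 with hs | hs | hs
  · rw [volume_setOf_le_mul_of_neg hs, pi_sq_div_six_mul_Φ₀_of_neg hs]
  · rw [hs, volume_setOf_le_mul_zero, pi_sq_div_six_mul_Φ₀_of_add_eq_zero hs]
  · rw [volume_setOf_le_mul_of_pos hs, pi_sq_div_six_mul_Φ₀_of_pos hs]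
end

section
/- Let S = {((1+|z|)⁻¹, −z, z) : z ∈ (−1,1)} ⊂ ℝ_{>0} × (−1,1) × (−1,1). The function Φ₀ is discontinuous at every point of S; more precisely, for every point p ∈ S and every open neighbourhood U of p in ℝ_{>0} × (−1,1) × (−1,1), the image Φ₀(U) contains the full interval [0, 6/π²]. -/
open Real Set MeasureTheory

open Filter Topology

/-!
At the curve point `p = ((1+|z|)⁻¹, -z, z)` we have `w + z = 0`, and there `Φ₀ = 6/π²`. Moving `w`
away from `-z` by `δ > 0` in the direction that increases `|w|`, the ratio in the definition of
`Φ₀` has denominator `|w + z| = δ`, so shifting `ξ⁻¹` by `δ t` produces the value `(6/π²) t` for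
any `t ∈ [0, 1]`, at points that tend to `p` as `δ → 0⁺`.
-/

lemma Υ_of_mem_Icc {t : ℝ} (ht : t ∈ Icc 0 1) : Υ t = t := by
  unfold Υ
  split_ifs <;> linarith [ht.1, ht.2]

lemma Φ₀_inv_one_add_abs_neg (z : ℝ) : Φ₀ (1 + |z|)⁻¹ (-z) z = 6 / π ^ 2 := by
  simp [Φ₀]

lemma Φ₀_eq_mul {δ t w z : ℝ} (hδ : 0 < δ) (hw : |w| = |z| + δ) (hwz : |w + z| = δ)
    (ht : t ∈ Icc 0 1) : Φ₀ (1 + |z| + δ * t)⁻¹ w z = 6 / π ^ 2 * t := by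
  have hne : w + z ≠ 0 := by
    rintro h
    rw [h, abs_zero] at hwz
    exact hδ.ne hwz
  rw [Φ₀, if_pos hne, inv_inv, hwz, hw, max_eq_left (by linarith)]
  have harg : 1 + (1 + |z| + δ * t - (|z| + δ) - 1) / δ = t := by
    field_simp
    ring
  rw [harg, Υ_of_mem_Icc ht]

lemma abs_add_mul_sign {z δ : ℝ} (hδ : 0 ≤ δ) :
    |z + δ * (if 0 ≤ z then 1 else -1)| = |z| + δ := by
  split_ifs with h
  · rw [abs_of_nonneg h, abs_of_nonneg (by linarith)]
    ring
  · push Not at h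
    rw [abs_of_neg h, abs_of_neg (by linarith)]
    ring

lemma Icc_subset_image_Φ₀ {z : ℝ} {U : Set (ℝ × ℝ × ℝ)} (hU : U ∈ 𝓝 ((1 + |z|)⁻¹, -z, z)) :
    Icc 0 (6 / π ^ 2) ⊆ (fun q : ℝ × ℝ × ℝ => Φ₀ q.1 q.2.1 q.2.2) '' U := by
  intro c hc
  have hπ : (0 : ℝ) < 6 / π ^ 2 := by positivity
  set t := c / (6 / π ^ 2)
  have ht : t ∈ Icc 0 1 :=
    ⟨div_nonneg hc.1 hπ.le, (div_le_one hπ).mpr hc.2⟩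
  set σ : ℝ := if 0 ≤ z then 1 else -1
  let γ : ℝ → ℝ × ℝ × ℝ := fun δ => ((1 + |z| + δ * t)⁻¹, -(z + δ * σ), z)
  have hγ : Tendsto γ (𝓝[>] 0) (𝓝 ((1 + |z|)⁻¹, -z, z)) := by
    have hcont : ContinuousAt γ 0 := by
      have : 1 + |z| + 0 * t ≠ 0 := by rw [zero_mul, add_zero]; positivity
      fun_prop (disch := exact this)
    simpa [γ] using hcont.tendsto.mono_left nhdsWithin_le_nhds
  obtain ⟨δ, hδU, hδ⟩ := ((hγ.eventually hU).and self_mem_nhdsWithin).exists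
  refine ⟨γ δ, hδU, ?_⟩
  have hw : |-(z + δ * σ)| = |z| + δ := by rw [abs_neg, abs_add_mul_sign hδ.le]
  have hwz : |-(z + δ * σ) + z| = δ := by
    rw [show -(z + δ * σ) + z = -(δ * σ) by ring, abs_neg, abs_mul, abs_of_pos hδ]
    simp [σ, apply_ite]
  change Φ₀ (1 + |z| + δ * t)⁻¹ (-(z + δ * σ)) z = c
  rw [Φ₀_eq_mul hδ hw hwz ht]
  exact mul_div_cancel₀ c hπ.ne'

lemma not_continuousAt_Φ₀ (z : ℝ) :
    ¬ ContinuousAt (fun q : ℝ × ℝ × ℝ => Φ₀ q.1 q.2.1 q.2.2) ((1 + |z|)⁻¹, -z, z) := by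
  intro hcont
  have hπ : (0 : ℝ) < 6 / π ^ 2 := by positivity
  have hnhds := hcont.preimage_mem_nhds (Ioi_mem_nhds (a := 6 / π ^ 2 / 2)
    (by rw [Φ₀_inv_one_add_abs_neg]; linarith))
  obtain ⟨q, hq, hq0⟩ := Icc_subset_image_Φ₀ hnhds ⟨le_rfl, hπ.le⟩
  have : 6 / π ^ 2 / 2 < 0 := hq0 ▸ hq
  linarith

/-- `Φ₀` is discontinuous at every point of the curve
`S = {((1+|z|)⁻¹, −z, z) : z ∈ (−1,1)}`; indeed, on any open neighbourhood `U`
of such a point, the image of `U` intersected with the domain under `Φ₀`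
contains the whole interval `[0, 6/π²]`. -/
theorem stmt4 (D : Set (ℝ × ℝ × ℝ))
    (hD : D = Ioi (0 : ℝ) ×ˢ Ioo (-1 : ℝ) 1 ×ˢ Ioo (-1 : ℝ) 1)
    (z : ℝ) (hz : z ∈ Ioo (-1 : ℝ) 1)
    (p : ℝ × ℝ × ℝ) (hp : p = ((1 + |z|)⁻¹, -z, z)) :
    ¬ ContinuousWithinAt (fun q : ℝ × ℝ × ℝ => Φ₀ q.1 q.2.1 q.2.2) D p ∧
    ∀ U : Set (ℝ × ℝ × ℝ), IsOpen U → p ∈ U →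
      Icc (0 : ℝ) (6 / π ^ 2) ⊆
        (fun q : ℝ × ℝ × ℝ => Φ₀ q.1 q.2.1 q.2.2) '' (U ∩ D) := by
  subst hD hp
  have hpD : Ioi (0 : ℝ) ×ˢ Ioo (-1 : ℝ) 1 ×ˢ Ioo (-1 : ℝ) 1 ∈ 𝓝 ((1 + |z|)⁻¹, -z, z) :=
    (isOpen_Ioi.prod (isOpen_Ioo.prod isOpen_Ioo)).mem_nhds
      ⟨mem_Ioi.mpr (by positivity), ⟨by linarith [hz.2], by linarith [hz.1]⟩, hz⟩
  refine ⟨?_, fun U hU hpU => Icc_subset_image_Φ₀ (inter_mem (hU.mem_nhds hpU) hpD)⟩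
  rw [continuousWithinAt_iff_continuousAt hpD]
  exact not_continuousAt_Φ₀ z
end

section
/- Let S = {((1+|z|)⁻¹, −z, z) : z ∈ (−1,1)} ⊂ ℝ_{>0} × (−1,1) × (−1,1). The function Φ₀ is continuous at every point of (ℝ_{>0} × (−1,1) × (−1,1)) ∖ S. -/
open Real Set MeasureTheory

lemma upsilon_eq : Υ = fun x => min (max x 0) 1 := by
  funext x
  unfold Υ
  rcases le_or_gt x 0 with h | h
  · rw [if_pos h, max_eq_right h, min_eq_left (by norm_num)]
  · rw [if_neg (not_le.mpr h), max_eq_left h.le]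
    rcases lt_or_ge x 1 with h1 | h1
    · rw [if_pos h1, min_eq_left h1.le]
    · rw [if_neg (not_lt.mpr h1), min_eq_right h1]

lemma upsilon_cont : Continuous Υ := by
  rw [upsilon_eq]; continuity

lemma upsilon_of_nonpos {x : ℝ} (h : x ≤ 0) : Υ x = 0 := by
  unfold Υ; rw [if_pos h]

lemma upsilon_of_one_le {x : ℝ} (h : 1 ≤ x) : Υ x = 1 := by
  unfold Υ; rw [if_neg (by linarith), if_neg (by linarith)]

/-- `Φ₀` is continuous at every point of its domain away from the curve
`S = {((1+|z|)⁻¹, −z, z) : z ∈ (−1,1)}`. -/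
theorem stmt5 (D S : Set (ℝ × ℝ × ℝ))
    (hD : D = Ioi (0 : ℝ) ×ˢ Ioo (-1 : ℝ) 1 ×ˢ Ioo (-1 : ℝ) 1)
    (hS : S = {q : ℝ × ℝ × ℝ | ∃ z ∈ Ioo (-1 : ℝ) 1, q = ((1 + |z|)⁻¹, -z, z)})
    (p : ℝ × ℝ × ℝ) (hp : p ∈ D \ S) :
    ContinuousWithinAt (fun q : ℝ × ℝ × ℝ => Φ₀ q.1 q.2.1 q.2.2) D p := by
  obtain ⟨hpD, hpS⟩ := hp
  obtain ⟨ξ, w, z⟩ := p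
  rw [hD] at hpD
  obtain ⟨hξ, hw, hz⟩ := hpD
  simp only [mem_Ioi] at hξ
  apply ContinuousAt.continuousWithinAt
  by_cases hwz : w + z ≠ 0
  · -- away from the diagonal: Φ₀ agrees with a continuous function
    have hcont : ContinuousAt (fun q : ℝ × ℝ × ℝ =>
        (6 / π ^ 2) * Υ (1 + (q.1⁻¹ - max |q.2.1| |q.2.2| - 1) / |q.2.1 + q.2.2|))
        (ξ, w, z) := by
      apply ContinuousAt.mul continuousAt_const
      apply upsilon_cont.continuousAt.comp
      apply ContinuousAt.add continuousAt_const
      apply ContinuousAt.div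
      · exact ((continuous_fst.continuousAt.inv₀ hξ.ne').sub
          (((continuous_fst.comp continuous_snd).abs.max
            (continuous_snd.comp continuous_snd).abs).continuousAt)).sub continuousAt_const
      · exact (((continuous_fst.comp continuous_snd).add
          (continuous_snd.comp continuous_snd)).abs).continuousAt
      · simpa [abs_eq_zero] using hwz
    apply hcont.congr
    have hU : {q : ℝ × ℝ × ℝ | q.2.1 + q.2.2 ≠ 0} ∈ nhds (ξ, w, z) := by
      apply IsOpen.mem_nhds
      · exact isOpen_compl_iff.mpr (isClosed_eq
          ((continuous_fst.comp continuous_snd).add (continuous_snd.comp continuous_snd))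
          continuous_const)
      · exact hwz
    filter_upwards [hU] with q hq
    simp only [Φ₀, if_pos hq]
  · -- on the diagonal
    push_neg at hwz
    have hwez : w = -z := by linarith
    have habs : |w| = |z| := by rw [hwez, abs_neg]
    -- ξ⁻¹ ≠ 1 + |w|
    have hne : ξ⁻¹ ≠ 1 + |w| := by
      intro h
      apply hpS
      rw [hS]
      refine ⟨z, hz, ?_⟩
      have : ξ = (1 + |z|)⁻¹ := by
        rw [← habs, ← h, inv_inv]
      rw [this, hwez]
    obtain ⟨c, hc⟩ : ∃ c : ℝ, c = ξ⁻¹ - |w| - 1 := ⟨_, rfl⟩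
    have hcne : c ≠ 0 := by
      intro h; apply hne; rw [h] at hc; linarith
    -- continuity of auxiliary functions
    have hg : Filter.Tendsto (fun q : ℝ × ℝ × ℝ => q.1⁻¹ - max |q.2.1| |q.2.2| - 1)
        (nhds (ξ, w, z)) (nhds c) := by
      have : ContinuousAt (fun q : ℝ × ℝ × ℝ => q.1⁻¹ - max |q.2.1| |q.2.2| - 1)
          (ξ, w, z) :=
        ((continuous_fst.continuousAt.inv₀ hξ.ne').sub
          (((continuous_fst.comp continuous_snd).abs.max
            (continuous_snd.comp continuous_snd).abs).continuousAt)).sub continuousAt_const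
      have heq : c = ξ⁻¹ - max |w| |z| - 1 := by
        rw [hc, max_eq_left habs.ge]

      rw [heq]
      exact this
    have hh : Filter.Tendsto (fun q : ℝ × ℝ × ℝ => |q.2.1 + q.2.2|)
        (nhds (ξ, w, z)) (nhds 0) := by
      have : ContinuousAt (fun q : ℝ × ℝ × ℝ => |q.2.1 + q.2.2|) (ξ, w, z) :=
        (((continuous_fst.comp continuous_snd).add
          (continuous_snd.comp continuous_snd)).abs).continuousAt
      have h0 : (0:ℝ) = |w + z| := by rw [hwz, abs_zero]
      rw [h0]
      exact this
    rcases hcne.lt_or_gt with hcneg | hcpos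
    · -- c < 0 : Φ₀ is eventually 0
      have hΦp : Φ₀ ξ w z = 0 := by
        simp only [Φ₀, if_neg (not_not.mpr hwz)]
        rw [if_pos (by linarith)]
      have hev : ∀ᶠ q : ℝ × ℝ × ℝ in nhds (ξ, w, z),
          Φ₀ q.1 q.2.1 q.2.2 = 0 := by
        filter_upwards [hg.eventually_lt_const (by linarith : c < c / 2),
          hh.eventually_lt_const (by linarith : (0:ℝ) < -c / 2)] with q h1 h2
        by_cases hq : q.2.1 + q.2.2 ≠ 0
        · simp only [Φ₀, if_pos hq]
          rw [upsilon_of_nonpos, mul_zero]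
          have habsq : 0 < |q.2.1 + q.2.2| := abs_pos.mpr hq
          rw [← sub_nonpos]
          have : (q.1⁻¹ - max |q.2.1| |q.2.2| - 1) / |q.2.1 + q.2.2| ≤ -1 := by
            rw [div_le_iff₀ habsq]
            nlinarith
          linarith
        · push_neg at hq
          simp only [Φ₀, if_neg (not_not.mpr hq)]
          rw [if_pos]
          have hz' : q.2.2 = -q.2.1 := by linarith
          have : max |q.2.1| |q.2.2| = |q.2.1| := by
            rw [hz', abs_neg, max_self]
          rw [← this]; linarith
      have := (continuousAt_const : ContinuousAt (fun _ : ℝ × ℝ × ℝ => (0:ℝ)) (ξ, w, z))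
      apply ContinuousAt.congr this
      filter_upwards [hev] with q hq using hq.symm
    · -- c > 0 : Φ₀ is eventually 6/π²
      have hΦp : Φ₀ ξ w z = 6 / π ^ 2 := by
        simp only [Φ₀, if_neg (not_not.mpr hwz)]
        rw [if_neg (by push_neg; linarith)]
      have hev : ∀ᶠ q : ℝ × ℝ × ℝ in nhds (ξ, w, z),
          Φ₀ q.1 q.2.1 q.2.2 = 6 / π ^ 2 := by
        filter_upwards [hg.eventually_const_lt (by linarith : c / 2 < c),
          hh.eventually_lt_const (by linarith : (0:ℝ) < c / 2)] with q h1 h2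
        by_cases hq : q.2.1 + q.2.2 ≠ 0
        · simp only [Φ₀, if_pos hq]
          rw [upsilon_of_one_le, mul_one]
          have habsq : 0 < |q.2.1 + q.2.2| := abs_pos.mpr hq
          have : (1:ℝ) ≤ (q.1⁻¹ - max |q.2.1| |q.2.2| - 1) / |q.2.1 + q.2.2| := by
            rw [le_div_iff₀ habsq]
            nlinarith
          linarith
        · push_neg at hq
          simp only [Φ₀, if_neg (not_not.mpr hq)]
          rw [if_neg]
          push_neg
          have hz' : q.2.2 = -q.2.1 := by linarith
          have : max |q.2.1| |q.2.2| = |q.2.1| := by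
            rw [hz', abs_neg, max_self]
          rw [← this]; linarith
      have := (continuousAt_const : ContinuousAt (fun _ : ℝ × ℝ × ℝ => (6 / π ^ 2 : ℝ)) (ξ, w, z))
      apply ContinuousAt.congr this
      filter_upwards [hev] with q hq using hq.symm
end

section
/- There exists a constant C > 0 such that for all ξ ≥ 2 and all w, z ∈ (−1,1) one has |Φ₀(ξ,w,z) − E(ξ,w,z)| ≤ C·ξ⁻², where E(ξ,w,z) = (3/π²)·(1 − max(u,y))·ξ⁻¹ if w·z > 0 and max(u,y) < 1 (with u = ξ(1−|w|) and y = ξ(1−|z|)), and E(ξ,w,z) = 0 otherwise. -/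
open Real Set

set_option maxHeartbeats 1000000

/-- The main asymptotic term of `Φ₀(ξ,w,z)` as `ξ → ∞`. -/
noncomputable def E₀ (ξ w z : ℝ) : ℝ :=
  if 0 < w * z ∧ max (ξ * (1 - |w|)) (ξ * (1 - |z|)) < 1 then
    (3 / π ^ 2) * (1 - max (ξ * (1 - |w|)) (ξ * (1 - |z|))) * ξ⁻¹
  else 0

/-- Uniform asymptotics: `Φ₀(ξ,w,z) = E₀(ξ,w,z) + O(ξ⁻²)` as `ξ → ∞`,
uniformly in `w, z ∈ (−1,1)`. -/
theorem stmt15 :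
    ∃ C : ℝ, 0 < C ∧ ∀ ξ w z : ℝ, 2 ≤ ξ → w ∈ Ioo (-1 : ℝ) 1 →
      z ∈ Ioo (-1 : ℝ) 1 → |Φ₀ ξ w z - E₀ ξ w z| ≤ C * ξ⁻¹ ^ 2 := by
  refine ⟨1, one_pos, ?_⟩
  intro ξ w z hξ hw hz
  have hξ0 : (0:ℝ) < ξ := by linarith
  have hξi0 : (0:ℝ) < ξ⁻¹ := inv_pos.mpr hξ0
  have hξξ : ξ * ξ⁻¹ = 1 := mul_inv_cancel₀ hξ0.ne'
  have hξi : ξ⁻¹ ≤ 1/2 := by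
    rw [inv_le_comm₀ hξ0 (by norm_num)]; linarith
  have hpi : (0:ℝ) < π ^ 2 := by positivity
  have hpi6 : 6 / π ^ 2 ≤ 1 := by
    rw [div_le_one hpi]; nlinarith [Real.pi_gt_three]
  have haw : |w| < 1 := abs_lt.mpr ⟨hw.1, hw.2⟩
  have haz : |z| < 1 := abs_lt.mpr ⟨hz.1, hz.2⟩
  by_cases hwz : 0 < w * z
  · -- same sign
    have hsign : |w + z| = |w| + |z| := by
      rcases mul_pos_iff.mp hwz with ⟨hw0, hz0⟩ | ⟨hw0, hz0⟩
      · rw [abs_of_pos hw0, abs_of_pos hz0, abs_of_pos (by linarith)]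
      · rw [abs_of_neg hw0, abs_of_neg hz0, abs_of_neg (by linarith)]; ring
    have hne : w + z ≠ 0 := by
      intro h
      have hz' : z = -w := by linarith
      rw [hz'] at hwz
      nlinarith [sq_nonneg w]
    set m := min |w| |z| with hm
    set M := max |w| |z| with hM
    have hmM : m + M = |w| + |z| := min_add_max _ _
    have hm0 : 0 ≤ m := le_min (abs_nonneg w) (abs_nonneg z)
    have hmle : m ≤ M := min_le_max
    have hM1 : M < 1 := max_lt haw haz
    have hm1 : m < 1 := lt_of_le_of_lt hmle hM1
    have hmax : max (ξ * (1 - |w|)) (ξ * (1 - |z|)) = ξ * (1 - m) := by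
      rcases le_total |w| |z| with h | h
      · rw [hm, min_eq_left h, max_eq_left (by nlinarith)]
      · rw [hm, min_eq_right h, max_eq_right (by nlinarith)]
    have hs0 : (0:ℝ) < |w + z| := abs_pos.mpr hne
    have hs : |w + z| = m + M := by rw [hsign, hmM]
    clear_value m M
    by_cases hcond : ξ * (1 - m) < 1
    · -- main regime
      have h1m : 1 - m < ξ⁻¹ := by nlinarith
      have hsge1 : (1:ℝ) ≤ m + M := by linarith
      have ht0 : 0 < m + ξ⁻¹ - 1 := by linarith
      have htlt : m + ξ⁻¹ - 1 < ξ⁻¹ := by linarith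
      have hAeq : 1 + (ξ⁻¹ - M - 1) / |w + z| = (m + ξ⁻¹ - 1) / (m + M) := by
        rw [hs]; field_simp; ring
      have hA0 : ¬ ((m + ξ⁻¹ - 1) / (m + M) ≤ 0) := by
        push_neg
        exact div_pos ht0 (by linarith)
      have hA1 : (m + ξ⁻¹ - 1) / (m + M) < 1 := by
        rw [div_lt_one (by linarith)]; linarith
      have hE : E₀ ξ w z = (3 / π ^ 2) * (1 - ξ * (1 - m)) * ξ⁻¹ := by
        rw [E₀, if_pos ⟨hwz, by rw [hmax]; exact hcond⟩, hmax]
      have hΦ : Φ₀ ξ w z = (6 / π ^ 2) * ((m + ξ⁻¹ - 1) / (m + M)) := by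
        rw [Φ₀, if_pos hne, ← hM, hAeq, Υ, if_neg hA0, if_pos hA1]
      rw [hΦ, hE]
      set t := m + ξ⁻¹ - 1 with htdef
      set s := m + M with hsdef
      clear_value t s
      have hs1 : (1:ℝ) ≤ s := hsge1
      have hs2 : 2 - s ≤ 2 * ξ⁻¹ := by
        have : 1 - M ≤ 1 - m := by linarith
        simp only [hsdef]; linarith
      have hEt : (3 / π ^ 2) * (1 - ξ * (1 - m)) * ξ⁻¹ = (3 / π ^ 2) * t := by
        simp only [htdef]; field_simp; ring
      rw [hEt]
      have hss : 0 < s := by linarith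
      have hsle2 : s ≤ 2 := by simp only [hsdef]; linarith
      have key1 : t ≤ 2 * (t / s) := by
        rw [show 2 * (t / s) = 2 * t / s by ring, le_div_iff₀ hss]
        nlinarith
      have key2 : 2 * (t / s) - t ≤ 2 * ξ⁻¹ ^ 2 := by
        rw [sub_le_iff_le_add, show 2 * (t / s) = 2 * t / s by ring, div_le_iff₀ hss]
        nlinarith [mul_nonneg (by linarith : (0:ℝ) ≤ 2 * ξ⁻¹ - (2 - s)) ht0.le,
          mul_nonneg (by linarith : (0:ℝ) ≤ ξ⁻¹ - t) hξi0.le,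
          mul_nonneg (by linarith : (0:ℝ) ≤ s - 1) (sq_nonneg ξ⁻¹)]
      have hdiff : 6 / π ^ 2 * (t / s) - 3 / π ^ 2 * t
          = (3 / π ^ 2) * (2 * (t / s) - t) := by ring
      have hu0 : 0 ≤ 2 * (t / s) - t := by linarith
      have h3 : 3 / π ^ 2 ≤ 1 / 2 := by
        rw [div_le_div_iff₀ hpi (by norm_num)]; nlinarith [Real.pi_gt_three]
      rw [hdiff, abs_of_nonneg (mul_nonneg (by positivity) hu0)]
      nlinarith [mul_le_mul h3 key2 hu0 (by norm_num : (0:ℝ) ≤ 1/2)]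
    · -- tail regime: both vanish
      push_neg at hcond
      have h1m : ξ⁻¹ ≤ 1 - m := by nlinarith
      have hA0 : 1 + (ξ⁻¹ - M - 1) / |w + z| ≤ 0 := by
        have hd : (ξ⁻¹ - M - 1) / |w + z| ≤ -1 := by
          rw [div_le_iff₀ hs0, hs]; nlinarith
        linarith
      have hΦ : Φ₀ ξ w z = 0 := by
        rw [Φ₀, if_pos hne, ← hM, Υ, if_pos hA0, mul_zero]
      have hE : E₀ ξ w z = 0 := by
        rw [E₀, if_neg]
        rintro ⟨-, h⟩
        rw [hmax] at h; linarith
      rw [hΦ, hE]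
      simp only [sub_zero, abs_zero]
      positivity
  · -- opposite signs: both vanish
    have hE : E₀ ξ w z = 0 := by
      rw [E₀, if_neg]; rintro ⟨h, -⟩; exact hwz h
    have hΦ : Φ₀ ξ w z = 0 := by
      by_cases hne : w + z = 0
      · rw [Φ₀, if_neg (by simpa using hne), if_pos]
        have := abs_nonneg w; linarith
      · have hs0 : (0:ℝ) < |w + z| := abs_pos.mpr hne
        push_neg at hwz
        have hle : |w + z| ≤ max |w| |z| := by
          rcases mul_nonpos_iff.mp hwz with ⟨hw0, hz0⟩ | ⟨hw0, hz0⟩ <;>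
          · rw [abs_le]
            constructor <;>
              linarith [le_abs_self w, le_abs_self z, neg_abs_le w, neg_abs_le z,
                le_max_left |w| |z|, le_max_right |w| |z|]
        have hA0 : 1 + (ξ⁻¹ - max |w| |z| - 1) / |w + z| ≤ 0 := by
          have hd : (ξ⁻¹ - max |w| |z| - 1) / |w + z| ≤ -1 := by
            rw [div_le_iff₀ hs0]; nlinarith
          linarith
        rw [Φ₀, if_pos hne, Υ, if_pos hA0, mul_zero]
    rw [hΦ, hE]
    simp only [sub_zero, abs_zero]
    positivity
end
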